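/- Let μ be an instance of REP over Σ with words u_start, u_end and rules w_i → w'_i for 1 ≤ i ≤ n, and let # ∉ Σ be a fresh letter. Define, with distinct variables x_1,…,x_{3n+3}: α := x_1 # x_2 # x_3 w_1 x_4 # x_5 # x_6 w_2 ⋯ x_{3n+1} # x_{3n+2} # x_{3n+3} # u_end and β := # u_start x_1 # x_2 # x_3 w'_1 x_4 # x_5 # x_6 w'_2 ⋯ w'_n x_{3n+1} # x_{3n+2} # x_{3n+3}. Then the equation α = β has a solution if and only if the equation α_μ = β_μ has an overlapping solution. -/

import Mathlib

/-!
Framework for REP (Rewriting with Programmed Rules) and the associated word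
equations α_μ = β_μ.  Constants: `Option A` models Σ ∪ {#}, where `none` is the
fresh letter `#` and `some a` embeds a ∈ Σ.  Variables are modelled by `ℕ`
(the variable x_i is `i`).
-/

namespace REP

/-- `u_end` is obtained from `u_start` by applying each of the `n` rules
`w i → w' i` (for `i = 1, …, n`) once, in order, each application replacing one
occurrence of `w i` by `w' i`. -/
def SatisfiesREP {A : Type} (n : ℕ) (ustart uend : List A) (w w' : ℕ → List A) : Prop :=
  ∃ u : ℕ → List A, u 0 = ustart ∧ u n = uend ∧
    ∀ i, 1 ≤ i → i ≤ n → ∃ s t : List A,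
      u (i - 1) = s ++ w i ++ t ∧ u i = s ++ w' i ++ t

/-- Apply a substitution (identity on constants) to a pattern. -/
def applySub {A : Type} (h : ℕ → List (Option A)) : List (Option A ⊕ ℕ) → List (Option A)
  | [] => []
  | Sum.inl a :: rest => a :: applySub h rest
  | Sum.inr x :: rest => h x ++ applySub h rest

/-- Embed a constant word over Σ into patterns over Σ ∪ {#}. -/
def lift {A : Type} (u : List A) : List (Option A ⊕ ℕ) := u.map (fun a => Sum.inl (some a))

/-- Embed a constant word over Σ into words over Σ ∪ {#}. -/
def liftW {A : Type} (u : List A) : List (Option A) := u.map some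

/-- The fresh letter `#` as a pattern symbol. -/
def hash {A : Type} : Option A ⊕ ℕ := Sum.inl none

/-- `x_1 w_1 x_2 w_2 ⋯ x_n w_n`. -/
def blocks {A : Type} (w : ℕ → List A) : ℕ → List (Option A ⊕ ℕ)
  | 0 => []
  | n + 1 => blocks w n ++ (Sum.inr (n + 1) :: lift (w (n + 1)))

/-- α_μ = `x_1 w_1 x_2 w_2 ⋯ x_n w_n x_{n+1} # u_end`. -/
def alphaMu {A : Type} (n : ℕ) (uend : List A) (w : ℕ → List A) : List (Option A ⊕ ℕ) :=
  blocks w n ++ [Sum.inr (n + 1), hash] ++ lift uend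

/-- β_μ = `# u_start x_1 w'_1 x_2 w'_2 ⋯ x_n w'_n x_{n+1}`. -/
def betaMu {A : Type} (n : ℕ) (ustart : List A) (w' : ℕ → List A) : List (Option A ⊕ ℕ) :=
  hash :: lift ustart ++ blocks w' n ++ [Sum.inr (n + 1)]

/-- `x_1 w_1 ⋯ x_i w_i`. -/
def alphaPrefix {A : Type} (w : ℕ → List A) (i : ℕ) : List (Option A ⊕ ℕ) := blocks w i

/-- `# u_start x_1 w'_1 ⋯ w'_{i-1} x_i`. -/
def betaPrefix {A : Type} (ustart : List A) (w' : ℕ → List A) (i : ℕ) :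
    List (Option A ⊕ ℕ) :=
  hash :: lift ustart ++ blocks w' (i - 1) ++ [Sum.inr i]

/-- `h` is a solution of the equation α = β. -/
def IsSolution {A : Type} (h : ℕ → List (Option A)) (α β : List (Option A ⊕ ℕ)) : Prop :=
  applySub h α = applySub h β

/-- `h` is an overlapping solution of α_μ = β_μ : it is a solution and, for every
`1 ≤ i ≤ n`, there is `z_i` such that `w_i z_i` is a suffix of `h(x_i)` and
`h(# u_start x_1 w'_1 ⋯ w'_{i-1} x_i) = h(x_1 w_1 ⋯ x_i w_i) z_i`. -/
def OverlappingSolution {A : Type} (n : ℕ) (ustart uend : List A) (w w' : ℕ → List A)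
    (h : ℕ → List (Option A)) : Prop :=
  IsSolution h (alphaMu n uend w) (betaMu n ustart w') ∧
  ∀ i, 1 ≤ i → i ≤ n → ∃ z : List (Option A),
    (liftW (w i) ++ z) <:+ h i ∧
    applySub h (betaPrefix ustart w' i) = applySub h (alphaPrefix w i) ++ z

/-- `n`-fold concatenation `u^n` of the word `u`. -/
def npow {A : Type} (u : List A) : ℕ → List A
  | 0 => []
  | n + 1 => u ++ npow u n

/-- `y_i`, the suffix of `h(x_i)` of length `|v_i| - |w_i|`. -/
def ySuf {A : Type} (h : ℕ → List (Option A)) (v : ℕ → List (Option A)) (w : ℕ → List A)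
    (i : ℕ) : List (Option A) :=
  (h i).drop ((h i).length - ((v i).length - (w i).length))

/-- Two words are conjugate if `u = st` and `v = ts` for some words `s`, `t`. -/
def Conj {B : Type} (u v : List B) : Prop := ∃ s t : List B, u = s ++ t ∧ v = t ++ s

/-- The words `v_1, …, v_n` associated with an overlapping solution `h`
(as guaranteed by the characterisation of overlapping solutions):
`v_i` is a prefix of `h(x_i)`, `|w_i| ≤ |v_i|`, `h(x_i) w_i` is a prefix of `v_i^ω`
(i.e. of `v_i^m` for all sufficiently large `m`), `v_1 = # u_start`,
`v_i = y_{i-1} w'_{i-1}` for `2 ≤ i ≤ n`, and `y_n w'_n h(x_{n+1}) = h(x_{n+1}) # u_end`. -/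
def AssocWords {A : Type} (n : ℕ) (ustart uend : List A) (w w' : ℕ → List A)
    (h : ℕ → List (Option A)) (v : ℕ → List (Option A)) : Prop :=
  (∀ i, 1 ≤ i → i ≤ n →
    v i <+: h i ∧ (w i).length ≤ (v i).length ∧
    ∃ N : ℕ, ∀ m : ℕ, N ≤ m → (h i ++ liftW (w i)) <+: npow (v i) m) ∧
  v 1 = none :: liftW ustart ∧
  (∀ i, 2 ≤ i → i ≤ n → v i = ySuf h v w (i - 1) ++ liftW (w' (i - 1))) ∧
  ySuf h v w n ++ liftW (w' n) ++ h (n + 1) = h (n + 1) ++ none :: liftW uend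

end REP

/-!
STATEMENT 2: there is a regular-ordered equation α = β (built with variables
x_1, …, x_{3n+3}) which is satisfiable iff α_μ = β_μ has an overlapping solution.
-/

namespace REP

/-- `(x_1 # x_2 # x_3 w_1)(x_4 # x_5 # x_6 w_2) ⋯ (x_{3n-2} # x_{3n-1} # x_{3n} w_n)`. -/
def blocks3 {A : Type} (w : ℕ → List A) : ℕ → List (Option A ⊕ ℕ)
  | 0 => []
  | n + 1 => blocks3 w n ++
      ([Sum.inr (3 * n + 1), hash, Sum.inr (3 * n + 2), hash, Sum.inr (3 * n + 3)] ++
        lift (w (n + 1)))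

/-- α := `x_1 # x_2 # x_3 w_1 ⋯ x_{3n+1} # x_{3n+2} # x_{3n+3} # u_end`. -/
def alphaEq {A : Type} (n : ℕ) (uend : List A) (w : ℕ → List A) : List (Option A ⊕ ℕ) :=
  blocks3 w n ++
    [Sum.inr (3 * n + 1), hash, Sum.inr (3 * n + 2), hash, Sum.inr (3 * n + 3), hash] ++
    lift uend

/-- β := `# u_start x_1 # x_2 # x_3 w'_1 ⋯ w'_n x_{3n+1} # x_{3n+2} # x_{3n+3}`. -/
def betaEq {A : Type} (n : ℕ) (ustart : List A) (w' : ℕ → List A) : List (Option A ⊕ ℕ) :=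
  hash :: lift ustart ++ blocks3 w' n ++
    [Sum.inr (3 * n + 1), hash, Sum.inr (3 * n + 2), hash, Sum.inr (3 * n + 3)]

end REP

/-!
A solution `g` of `α = β` gives the solution `h(x_i) = g(x_{3i-2}) # g(x_{3i-1}) # g(x_{3i})` of
`α_μ = β_μ`, in which every `h(x_i)` contains at least two `#`. For such a solution, counting `#` in
prefixes of the common image `h(α_μ) = h(β_μ)` shows that `h(x_1 w_1 ⋯ x_i w_i)` is a prefix of
`h(# u_start x_1 w'_1 ⋯ x_i)`, and `h(# u_start x_1 w'_1 ⋯ w'_{i-1})` one of `h(x_1 w_1 ⋯ x_i)`: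
this is exactly the overlapping condition.

Conversely, an overlapping solution amounts to a chain of conjugacy equations
`v_i h(x_i) = h(x_i) w_i z_i`, with `v_1 = # u_start`, `v_{i+1} = z_i w'_i` and
`v_{n+1} h(x_{n+1}) = h(x_{n+1}) # u_end`, each `v_i` containing exactly one `#`. Replacing every
`h(x_i)` by `v_i v_i h(x_i)` keeps the chain, hence yields a solution of `α_μ = β_μ` in which each
`h(x_i)` has two `#`, and cutting `h(x_i)` at two of them gives a solution of `α = β`.
-/

namespace REP

variable {A : Type}

section Substitution

variable (h : ℕ → List (Option A))

@[simp] lemma applySub_nil : applySub h [] = [] := rfl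

@[simp] lemma applySub_cons_inl (a : Option A) (p : List (Option A ⊕ ℕ)) :
    applySub h (Sum.inl a :: p) = a :: applySub h p := rfl

@[simp] lemma applySub_cons_inr (x : ℕ) (p : List (Option A ⊕ ℕ)) :
    applySub h (Sum.inr x :: p) = h x ++ applySub h p := rfl

@[simp] lemma applySub_hash_cons (p : List (Option A ⊕ ℕ)) :
    applySub h (hash :: p) = none :: applySub h p := rfl

@[simp] lemma applySub_append (p q : List (Option A ⊕ ℕ)) :
    applySub h (p ++ q) = applySub h p ++ applySub h q := by
  induction p with
  | nil => rfl
  | cons a p ih => cases a <;> simp [ih]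

@[simp] lemma applySub_lift (u : List A) : applySub h (lift u) = liftW u := by
  induction u with
  | nil => rfl
  | cons a u ih => exact congrArg (some a :: ·) ih

lemma applySub_prefix {p q : List (Option A ⊕ ℕ)} (hpq : p <+: q) :
    applySub h p <+: applySub h q := by
  obtain ⟨t, rfl⟩ := hpq
  exact ⟨applySub h t, (applySub_append h p t).symm⟩

@[simp] lemma applySub_blocks_succ (w : ℕ → List A) (k : ℕ) :
    applySub h (blocks w (k + 1)) = applySub h (blocks w k) ++ h (k + 1) ++ liftW (w (k + 1)) := by
  simp [blocks]

lemma applySub_alphaMu (n : ℕ) (uend : List A) (w : ℕ → List A) :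
    applySub h (alphaMu n uend w) = applySub h (blocks w n) ++ h (n + 1) ++ none :: liftW uend := by
  simp [alphaMu, hash]

lemma applySub_betaMu (n : ℕ) (ustart : List A) (w' : ℕ → List A) :
    applySub h (betaMu n ustart w') =
      none :: liftW ustart ++ applySub h (blocks w' n) ++ h (n + 1) := by
  simp [betaMu]

@[simp] lemma countP_isNone_liftW (u : List A) : (liftW u).countP Option.isNone = 0 := by
  simp [liftW, List.countP_map, Function.comp_def]

lemma countP_applySub_blocks (w w' : ℕ → List A) (k : ℕ) :
    (applySub h (blocks w k)).countP Option.isNone =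
      (applySub h (blocks w' k)).countP Option.isNone := by
  induction k with
  | zero => rfl
  | succ k ih => simp [ih]

end Substitution

lemma blocks_prefix (w : ℕ → List A) {k m : ℕ} (hkm : k ≤ m) : blocks w k <+: blocks w m := by
  induction m, hkm using Nat.le_induction with
  | base => exact List.prefix_refl _
  | succ m _ ih => exact ih.trans (List.prefix_append _ _)

lemma _root_.List.prefix_of_countP_lt {α : Type*} {l₁ l₂ l : List α} (p : α → Bool)
    (h₁ : l₁ <+: l) (h₂ : l₂ <+: l) (hlt : l₁.countP p < l₂.countP p) : l₁ <+: l₂ :=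
  (List.prefix_or_prefix_of_prefix h₁ h₂).resolve_right
    fun h => (h.sublist.countP_le).not_gt hlt

section Overlapping

variable {n : ℕ} {ustart uend : List A} {w w' : ℕ → List A} {h : ℕ → List (Option A)}

lemma overlappingSolution_iff :
    OverlappingSolution n ustart uend w w' h ↔
      IsSolution h (alphaMu n uend w) (betaMu n ustart w') ∧
      ∀ k < n, ∃ z, liftW (w (k + 1)) ++ z <:+ h (k + 1) ∧
        none :: liftW ustart ++ applySub h (blocks w' k) ++ h (k + 1) =
          applySub h (blocks w k) ++ h (k + 1) ++ liftW (w (k + 1)) ++ z := by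
  refine and_congr_right fun _ => ⟨fun H k hk => ?_, fun H i hi hin => ?_⟩
  · simpa [betaPrefix, alphaPrefix] using H (k + 1) (by omega) hk
  · obtain ⟨k, rfl⟩ := Nat.exists_eq_add_of_le' hi
    simpa [betaPrefix, alphaPrefix] using H k (by omega)

lemma overlappingSolution_of_isSolution
    (hsol : IsSolution h (alphaMu n uend w) (betaMu n ustart w'))
    (hcount : ∀ k < n, 2 ≤ (h (k + 1)).countP Option.isNone) :
    OverlappingSolution n ustart uend w w' h := by
  refine overlappingSolution_iff.2 ⟨hsol, fun k hk => ?_⟩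
  set P := applySub h (blocks w k)
  set Q := none :: liftW ustart ++ applySub h (blocks w' k)
  have hPQ : Q.countP Option.isNone = P.countP Option.isNone + 1 := by
    simp [Q, P, countP_applySub_blocks h w' w k]
  have hαpre : P ++ h (k + 1) ++ liftW (w (k + 1)) <+: applySub h (alphaMu n uend w) := by
    rw [← applySub_blocks_succ, applySub_alphaMu, List.append_assoc]
    exact (applySub_prefix h (blocks_prefix w hk)).trans (List.prefix_append _ _)
  have hβpre : Q ++ h (k + 1) <+: applySub h (alphaMu n uend w) := by
    have hpat : hash :: lift ustart ++ blocks w' (k + 1) <+: betaMu n ustart w' :=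
      ((List.prefix_append_right_inj _).2 (blocks_prefix w' hk)).trans (List.prefix_append _ _)
    rw [hsol]
    refine List.IsPrefix.trans ?_ (applySub_prefix h hpat)
    simp [Q]
  obtain ⟨z, hz⟩ := List.prefix_of_countP_lt Option.isNone hαpre hβpre (by simp [hPQ])
  obtain ⟨r, hr⟩ := List.prefix_of_countP_lt Option.isNone ((List.prefix_append _ _).trans hβpre)
    ((List.prefix_append _ _).trans hαpre) (by simp [hPQ]; have := hcount k hk; omega)
  have hhr : h (k + 1) = r ++ liftW (w (k + 1)) ++ z := by
    apply List.append_cancel_left (as := Q)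
    rw [← hz, ← hr]
    simp
  exact ⟨z, ⟨r, by rw [hhr, List.append_assoc]⟩, hz.symm⟩

end Overlapping

section PeriodChain

/-- `period ustart w' z k` is the word `v_{k+1}` of the paper; `z k` stands for `z_{k+1}`. -/
def period (ustart : List A) (w' : ℕ → List A) (z : ℕ → List (Option A)) : ℕ → List (Option A)
  | 0 => none :: liftW ustart
  | k + 1 => z k ++ liftW (w' (k + 1))

def IsPeriodChain (n : ℕ) (ustart uend : List A) (w w' : ℕ → List A)
    (h z : ℕ → List (Option A)) : Prop :=
  (∀ k < n, period ustart w' z k ++ h (k + 1) = h (k + 1) ++ liftW (w (k + 1)) ++ z k) ∧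
  period ustart w' z n ++ h (n + 1) = h (n + 1) ++ none :: liftW uend

variable {n : ℕ} {ustart uend : List A} {w w' : ℕ → List A} {h z : ℕ → List (Option A)}

lemma cons_liftW_append_applySub_blocks_eq {k : ℕ}
    (hz : ∀ j < k, period ustart w' z j ++ h (j + 1) = h (j + 1) ++ liftW (w (j + 1)) ++ z j) :
    none :: liftW ustart ++ applySub h (blocks w' k) =
      applySub h (blocks w k) ++ period ustart w' z k := by
  induction k with
  | zero => simp [blocks, period]
  | succ k ih =>
    calc none :: liftW ustart ++ applySub h (blocks w' (k + 1))
        = none :: liftW ustart ++ applySub h (blocks w' k) ++ h (k + 1) ++ liftW (w' (k + 1)) := by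
          simp
      _ = applySub h (blocks w k) ++ (period ustart w' z k ++ h (k + 1)) ++ liftW (w' (k + 1)) := by
          rw [ih fun j hj => hz j (by omega)]; simp
      _ = applySub h (blocks w (k + 1)) ++ period ustart w' z (k + 1) := by
          rw [hz k (by omega)]; simp [period]

lemma IsPeriodChain.isSolution (hc : IsPeriodChain n ustart uend w w' h z) :
    IsSolution h (alphaMu n uend w) (betaMu n ustart w') := by
  rw [IsSolution, applySub_alphaMu, applySub_betaMu, cons_liftW_append_applySub_blocks_eq hc.1]
  simp only [List.append_assoc, hc.2]

lemma OverlappingSolution.exists_isPeriodChain (hov : OverlappingSolution n ustart uend w w' h) :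
    ∃ z, IsPeriodChain n ustart uend w w' h z := by
  obtain ⟨hsol, hover⟩ := overlappingSolution_iff.1 hov
  choose! z _ hz using hover
  have hstep : ∀ k < n,
      period ustart w' z k ++ h (k + 1) = h (k + 1) ++ liftW (w (k + 1)) ++ z k := by
    intro k
    induction k using Nat.strong_induction_on with
    | _ k ih =>
      intro hk
      have hk' := hz k hk
      rw [cons_liftW_append_applySub_blocks_eq fun j hj => ih j hj (by omega)] at hk'
      simpa using hk'
  refine ⟨z, hstep, ?_⟩
  have hsol' := hsol
  rw [IsSolution, applySub_alphaMu, applySub_betaMu, cons_liftW_append_applySub_blocks_eq hstep]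
    at hsol'
  simpa using hsol'.symm

lemma IsPeriodChain.countP_period (hc : IsPeriodChain n ustart uend w w' h z) {k : ℕ} (hk : k ≤ n) :
    (period ustart w' z k).countP Option.isNone = 1 := by
  induction k with
  | zero => simp [period]
  | succ k ih =>
    have hcount := congrArg (List.countP Option.isNone) (hc.1 k (by omega))
    simp only [List.countP_append, countP_isNone_liftW] at hcount
    simp [period]
    omega

lemma IsPeriodChain.pump (hc : IsPeriodChain n ustart uend w w' h z) :
    IsPeriodChain n ustart uend w w' (fun i => period ustart w' z (i - 1) ++ h i) z := by
  refine ⟨fun k hk => ?_, ?_⟩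
  · simpa using congrArg (period ustart w' z k ++ ·) (hc.1 k hk)
  · simpa using congrArg (period ustart w' z n ++ ·) hc.2

lemma IsPeriodChain.exists_isSolution_two_le_countP
    (hc : IsPeriodChain n ustart uend w w' h z) :
    ∃ h', IsSolution h' (alphaMu n uend w) (betaMu n ustart w') ∧
      ∀ k < n + 1, 2 ≤ (h' (k + 1)).countP Option.isNone :=
  ⟨_, hc.pump.pump.isSolution, fun k hk => by
    simp [hc.countP_period (Nat.le_of_lt_succ hk)]; omega⟩

end PeriodChain

section TripleSplit

def IsTripleSplit (g f : ℕ → List (Option A)) (m : ℕ) : Prop :=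
  ∀ k < m, f (k + 1) = g (3 * k + 1) ++ none :: (g (3 * k + 2) ++ none :: g (3 * k + 3))

variable {g f : ℕ → List (Option A)}

lemma IsTripleSplit.applySub_blocks3 {m : ℕ} (hs : IsTripleSplit g f m) (w : ℕ → List A) :
    applySub g (blocks3 w m) = applySub f (blocks w m) := by
  induction m with
  | zero => rfl
  | succ m ih =>
    simp [blocks3, hash, ih fun k hk => hs k (by omega), hs m (by omega)]

lemma IsTripleSplit.isSolution_iff {n : ℕ} {ustart uend : List A} {w w' : ℕ → List A}
    (hs : IsTripleSplit g f (n + 1)) :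
    IsSolution g (alphaEq n uend w) (betaEq n ustart w') ↔
      IsSolution f (alphaMu n uend w) (betaMu n ustart w') := by
  have hs' : IsTripleSplit g f n := fun k hk => hs k (by omega)
  simp [IsSolution, alphaEq, betaEq, applySub_alphaMu, applySub_betaMu, hash, hs n (by omega),
    hs'.applySub_blocks3]

lemma isTripleSplit_merge (g : ℕ → List (Option A)) (m : ℕ) :
    IsTripleSplit g (fun i => g (3 * i - 2) ++ none :: (g (3 * i - 1) ++ none :: g (3 * i))) m :=
  fun k _ => by
    dsimp only
    rw [show 3 * (k + 1) - 2 = 3 * k + 1 by omega, show 3 * (k + 1) - 1 = 3 * k + 2 by omega,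
      show 3 * (k + 1) = 3 * k + 3 by omega]

lemma none_mem_of_countP_isNone_pos {l : List (Option A)} (hl : 0 < l.countP Option.isNone) :
    none ∈ l := by
  obtain ⟨x, hx, hnone⟩ := List.countP_pos_iff.1 hl
  rwa [Option.isNone_iff_eq_none.1 hnone] at hx

lemma exists_eq_append_none_append_none {l : List (Option A)} (hl : 2 ≤ l.countP Option.isNone) :
    ∃ a b c, l = a ++ none :: (b ++ none :: c) := by
  obtain ⟨a, r, rfl⟩ := List.append_of_mem (none_mem_of_countP_isNone_pos (l := l) (by omega))
  simp only [List.countP_append, List.countP_cons, Option.isNone_none, if_true] at hl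
  by_cases hr : 0 < r.countP Option.isNone
  · obtain ⟨b, c, rfl⟩ := List.append_of_mem (none_mem_of_countP_isNone_pos hr)
    exact ⟨a, b, c, rfl⟩
  · obtain ⟨b, c, rfl⟩ := List.append_of_mem (none_mem_of_countP_isNone_pos (l := a) (by omega))
    exact ⟨b, c, r, by simp⟩

lemma exists_isTripleSplit {m : ℕ} (hf : ∀ k < m, 2 ≤ (f (k + 1)).countP Option.isNone) :
    ∃ g, IsTripleSplit g f m := by
  have hsplit : ∀ k, ∃ a b c : List (Option A),
      k < m → f (k + 1) = a ++ none :: (b ++ none :: c) := by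
    intro k
    by_cases hk : k < m
    · obtain ⟨a, b, c, habc⟩ := exists_eq_append_none_append_none (hf k hk)
      exact ⟨a, b, c, fun _ => habc⟩
    · exact ⟨[], [], [], fun hk' => absurd hk' hk⟩
  choose a b c habc using hsplit
  refine ⟨fun i => if i % 3 = 1 then a (i / 3) else if i % 3 = 2 then b (i / 3) else c (i / 3 - 1),
    fun k hk => ?_⟩
  simp only [habc k hk, show (3 * k + 1) % 3 = 1 by omega, show (3 * k + 2) % 3 = 2 by omega,
    show (3 * k + 3) % 3 = 0 by omega, show (3 * k + 1) / 3 = k by omega,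
    show (3 * k + 2) / 3 = k by omega, show (3 * k + 3) / 3 - 1 = k by omega]
  simp

end TripleSplit

end REP

open REP in
theorem stmt2 (A : Type) (n : ℕ) (ustart uend : List A) (w w' : ℕ → List A) :
    (∃ g : ℕ → List (Option A), IsSolution g (alphaEq n uend w) (betaEq n ustart w')) ↔
    (∃ h : ℕ → List (Option A), OverlappingSolution n ustart uend w w' h) := by
  constructor
  · rintro ⟨g, hg⟩
    have hs := isTripleSplit_merge g (n + 1)
    exact ⟨_, overlappingSolution_of_isSolution (hs.isSolution_iff.1 hg) fun k _ => by simp; omega⟩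
  · rintro ⟨h, hov⟩
    obtain ⟨z, hc⟩ := hov.exists_isPeriodChain
    obtain ⟨h', hsol, hcount⟩ := hc.exists_isSolution_two_le_countP
    obtain ⟨g, hs⟩ := exists_isTripleSplit hcount
    exact ⟨g, hs.isSolution_iff.2 hsol⟩
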